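/- arXiv:2012.14287 — 3 statements merged into one kernel-verified Lean document; each statement's English description precedes it below -/
import Mathlib

section
/- For all natural numbers $n\ge 0$ and real $x\in[-1,1]$, the Legendre polynomial satisfies $|P_n(x)| \le 1$. -/
/-!
Differentiating `(x² - 1) u' = 2n x u`, where `u = (x² - 1)ⁿ`, `n + 1` times by Leibniz' rule shows
that `P = Pₙ` solves Legendre's equation `(x² - 1) P'' + 2x P' = n(n + 1) P`. Consequently Sonine's
function `G = n(n + 1) P² + (1 - x²) P'²` satisfies `G' = 2x P'²`: it decreases on `[-1, 0]` and
increases on `[0, 1]`, so on `[-1, 1]` it is bounded by its values at `±1`, which equal `n(n + 1)`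
because `Pₙ(±1) = (±1)ⁿ`. As `(1 - x²) P'² ≥ 0` on `[-1, 1]`, this gives `n(n + 1) P² ≤ n(n + 1)`.
-/

open Polynomial

/-- The Legendre polynomial via the Rodrigues formula. -/
noncomputable def legendrePoly (n : ℕ) : Polynomial ℝ :=
  Polynomial.C (1 / (2 ^ n * (n.factorial : ℝ))) *
    (Polynomial.derivative^[n] ((Polynomial.X ^ 2 - 1) ^ n))

open Set
open scoped Nat

namespace Polynomial

variable {R : Type*} [CommRing R]

theorem X_sq_sub_one_mul_derivative_X_sq_sub_one_pow (n : ℕ) :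
    (X ^ 2 - 1) * derivative ((X ^ 2 - 1) ^ n : R[X]) = 2 * (n : R[X]) * X * (X ^ 2 - 1) ^ n := by
  cases n with
  | zero => simp
  | succ n =>
    rw [derivative_pow, Nat.add_sub_cancel]
    simp only [derivative_sub, derivative_X_pow, derivative_one, C_eq_natCast]
    push_cast
    ring

theorem iterate_derivative_X_sq_sub_one_pow_ode (n : ℕ) :
    (X ^ 2 - 1) * derivative^[n + 2] ((X ^ 2 - 1) ^ n : R[X])
      + 2 * X * derivative^[n + 1] ((X ^ 2 - 1) ^ n : R[X])
      = (n : R[X]) * ((n : R[X]) + 1) * derivative^[n] ((X ^ 2 - 1) ^ n : R[X]) := by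
  set u : R[X] := (X ^ 2 - 1) ^ n
  -- written with factors `X` only, for which Mathlib has the iterated Leibniz rules
  have h := congrArg (derivative^[n + 1]) (X_sq_sub_one_mul_derivative_X_sq_sub_one_pow (R := R) n)
  rw [show (X ^ 2 - 1 : R[X]) * derivative u = derivative u * X * X - derivative u by ring,
    show (2 * (n : R[X]) * X * u) = ((2 * n : ℕ) : R[X]) * (u * X) by push_cast; ring,
    iterate_derivative_sub, iterate_derivative_mul_X, Nat.add_sub_cancel,
    iterate_derivative_derivative_mul_X, iterate_derivative_derivative_mul_X,
    iterate_derivative_natCast_mul, iterate_derivative_mul_X, Nat.add_sub_cancel,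
    ← Function.iterate_succ_apply] at h
  simp only [nsmul_eq_mul] at h
  push_cast at h
  linear_combination h

theorem eval_iterate_derivative_X_sq_sub_one_pow {a : R} (ha : a ^ 2 = 1) (n : ℕ) :
    (derivative^[n] ((X ^ 2 - 1) ^ n : R[X])).eval a = n ! * (2 * a) ^ n := by
  have hfactor : ((X ^ 2 - 1) ^ n : R[X]).map (algebraMap R R) = (X - C a) ^ n * (X + C a) ^ n := by
    rw [Algebra.algebraMap_self, map_id, ← mul_pow, ← C_1, ← ha, C_pow]
    ring
  rw [← coe_aeval_eq_eval, aeval_iterate_derivative_self _ _ _ hfactor]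
  simp [two_mul]

noncomputable def soninePoly (c : R) (P : R[X]) : R[X] :=
  C c * P ^ 2 + (1 - X ^ 2) * derivative P ^ 2

theorem derivative_soninePoly {c : R} {P : R[X]}
    (hP : (X ^ 2 - 1) * derivative (derivative P) + 2 * X * derivative P = C c * P) :
    derivative (soninePoly c P) = 2 * X * derivative P ^ 2 := by
  simp only [soninePoly, derivative_add, derivative_mul, derivative_C, derivative_sq,
    derivative_sub, derivative_one, derivative_X, map_ofNat]
  linear_combination (-2 * derivative P) * hP

theorem eval_le_max_of_mul_derivative_nonneg {Q : ℝ[X]} (hQ : ∀ y, 0 ≤ y * (derivative Q).eval y)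
    {a b x : ℝ} (hx : x ∈ Icc a b) : Q.eval x ≤ max (Q.eval a) (Q.eval b) := by
  rcases le_total x 0 with hx0 | hx0
  · have hanti : AntitoneOn (fun t ↦ Q.eval t) (Iic 0) := by
      refine antitoneOn_of_deriv_nonpos (convex_Iic 0) Q.continuousOn
        Q.differentiable.differentiableOn fun y hy ↦ ?_
      rw [interior_Iic] at hy
      rw [Polynomial.deriv]
      exact nonpos_of_mul_nonneg_right (hQ y) hy
    exact le_max_of_le_left (hanti (hx.1.trans hx0) hx0 hx.1)
  · have hmono : MonotoneOn (fun t ↦ Q.eval t) (Ici 0) := by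
      refine monotoneOn_of_deriv_nonneg (convex_Ici 0) Q.continuousOn
        Q.differentiable.differentiableOn fun y hy ↦ ?_
      rw [interior_Ici] at hy
      rw [Polynomial.deriv]
      exact nonneg_of_mul_nonneg_right (hQ y) hy
    exact le_max_of_le_right (hmono hx0 (hx0.trans hx.2) hx.2)

theorem sq_eval_le_max_of_legendre_ode {c : ℝ} (hc : 0 < c) {P : ℝ[X]}
    (hP : (X ^ 2 - 1) * derivative (derivative P) + 2 * X * derivative P = C c * P)
    {x : ℝ} (hx : x ∈ Icc (-1) 1) : P.eval x ^ 2 ≤ max (P.eval (-1) ^ 2) (P.eval 1 ^ 2) := by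
  have hsonine : ∀ y, 0 ≤ y * (derivative (soninePoly c P)).eval y := fun y ↦ by
    rw [derivative_soninePoly hP]
    simp only [eval_mul, eval_pow, eval_ofNat, eval_X]
    nlinarith [sq_nonneg (y * (derivative P).eval y)]
  have hx_sq : 0 ≤ 1 - x ^ 2 := by nlinarith [hx.1, hx.2]
  refine le_of_mul_le_mul_left ?_ hc
  calc c * P.eval x ^ 2
      ≤ c * P.eval x ^ 2 + (1 - x ^ 2) * (derivative P).eval x ^ 2 :=
        le_add_of_nonneg_right (mul_nonneg hx_sq (sq_nonneg _))
    _ = (soninePoly c P).eval x := by simp [soninePoly]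
    _ ≤ max ((soninePoly c P).eval (-1)) ((soninePoly c P).eval 1) :=
      eval_le_max_of_mul_derivative_nonneg hsonine hx
    _ = c * max (P.eval (-1) ^ 2) (P.eval 1 ^ 2) := by
      simp [soninePoly, mul_max_of_nonneg _ _ hc.le]

end Polynomial

theorem legendrePoly_ode (n : ℕ) :
    (X ^ 2 - 1) * derivative (derivative (legendrePoly n)) + 2 * X * derivative (legendrePoly n)
      = C ((n : ℝ) * (n + 1)) * legendrePoly n := by
  simp only [legendrePoly, derivative_C_mul, ← Function.iterate_succ_apply' derivative]
  rw [show C ((n : ℝ) * (n + 1)) = (n : ℝ[X]) * ((n : ℝ[X]) + 1) by simp]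
  linear_combination C (1 / (2 ^ n * (n ! : ℝ))) * iterate_derivative_X_sq_sub_one_pow_ode (R := ℝ) n

theorem eval_legendrePoly_of_sq_eq_one {a : ℝ} (ha : a ^ 2 = 1) (n : ℕ) :
    (legendrePoly n).eval a = a ^ n := by
  rw [legendrePoly, eval_mul, eval_C, eval_iterate_derivative_X_sq_sub_one_pow ha, mul_pow]
  field_simp

/-- The classical uniform bound `|P_n(x)| ≤ 1` on `[-1, 1]`. -/
theorem legendre_abs_le_one (n : ℕ) (x : ℝ) (hx : x ∈ Set.Icc (-1 : ℝ) 1) :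
    |(legendrePoly n).eval x| ≤ 1 := by
  rcases Nat.eq_zero_or_pos n with rfl | hn
  · simp [legendrePoly]
  have hc : (0 : ℝ) < n * (n + 1) := by positivity
  have hbound := sq_eval_le_max_of_legendre_ode hc (legendrePoly_ode n) hx
  rw [eval_legendrePoly_of_sq_eq_one (a := -1) (by norm_num),
    eval_legendrePoly_of_sq_eq_one (a := 1) (by norm_num),
    pow_right_comm, neg_one_sq, one_pow, one_pow, max_self] at hbound
  exact sq_le_one_iff_abs_le_one _ |>.mp hbound
end

section
/- For natural numbers $n\ge 1$, $0\le m\le n$, and $\nu\ge 0$, the solid-harmonic translation coefficients $c_{\nu\mu} := \left(\frac{2n+1}{2n+2\nu+1}\binom{n+m+\nu-\mu}{\nu-\mu}\binom{n-m+\nu+\mu}{\nu+\mu}\right)^{1/2}$ satisfy $\sum_{\mu=-\nu}^{\nu} c_{\nu\mu} \le \left(3(2\nu+1)\binom{2\nu+2n}{2\nu}\right)^{1/2}$. -/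
/-!
Writing `i = ν - μ`, `j = ν + μ`, the squared coefficients are
`(2n+1)/(2n+2ν+1) ⋅ C(n+m+i, i) ⋅ C(n-m+j, j)` over the antidiagonal `i + j = 2ν`. Their sum is
computed exactly by the upper Vandermonde convolution, read off from
`(1 - X)^{-(a+1)} (1 - X)^{-(b+1)} = (1 - X)^{-(a+b+2)}`, and equals `C(2ν+2n, 2ν)`.
Cauchy–Schwarz over the `2ν+1` terms then bounds the sum of the square roots.
-/

open Finset

theorem Nat.sum_antidiagonal_add_choose_mul_add_choose (a b t : ℕ) :
    ∑ p ∈ antidiagonal t, (a + p.1).choose a * (b + p.2).choose b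
      = (a + b + 1 + t).choose (a + b + 1) := by
  have h := congrArg (PowerSeries.coeff (R := ℤ) t)
    (pow_add (PowerSeries.mk 1 : PowerSeries ℤ) (a + 1) (b + 1))
  rw [show a + 1 + (b + 1) = a + b + 1 + 1 by ring, PowerSeries.mk_one_pow_eq_mk_choose_add,
    PowerSeries.mk_one_pow_eq_mk_choose_add, PowerSeries.mk_one_pow_eq_mk_choose_add,
    PowerSeries.coeff_mul] at h
  simp only [PowerSeries.coeff_mk] at h
  exact_mod_cast h.symm

theorem Real.sum_sqrt_le_sqrt_card_mul_sum {ι : Type*} (s : Finset ι) {f : ι → ℝ}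
    (hf : ∀ i, 0 ≤ f i) : ∑ i ∈ s, √(f i) ≤ √(#s * ∑ i ∈ s, f i) := by
  simpa [mul_comm] using Real.sum_sqrt_mul_sqrt_le s hf (g := fun _ => 1) (fun _ => zero_le_one)

theorem Finset.sum_Icc_neg_eq_sum_antidiagonal {M : Type*} [AddCommMonoid M] (ν : ℕ)
    (f : ℕ → ℕ → M) :
    ∑ μ ∈ Icc (-(ν : ℤ)) ν, f ((ν : ℤ) - μ).toNat ((ν : ℤ) + μ).toNat
      = ∑ p ∈ antidiagonal (2 * ν), f p.1 p.2 := by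
  refine sum_nbij' (fun μ => (((ν : ℤ) - μ).toNat, ((ν : ℤ) + μ).toNat))
    (fun p => (p.2 : ℤ) - ν) ?_ ?_ ?_ ?_ (fun _ _ => rfl)
  · intro μ hμ
    simp only [mem_Icc, HasAntidiagonal.mem_antidiagonal] at hμ ⊢
    omega
  · intro p hp
    simp only [mem_Icc, HasAntidiagonal.mem_antidiagonal] at hp ⊢
    omega
  · intro μ hμ
    simp only [mem_Icc] at hμ
    omega
  · intro p hp
    simp only [HasAntidiagonal.mem_antidiagonal] at hp
    ext <;> simp only <;> omega

theorem Nat.cast_div_mul_choose_succ (a k : ℕ) :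
    ((a + 1 : ℝ) / (a + k + 1)) * (a + k + 1).choose k = (a + k).choose k := by
  have h := Nat.choose_mul_succ_eq (a + k) k
  rw [show a + k + 1 - k = a + 1 by omega] at h
  rw [div_mul_eq_mul_div, div_eq_iff (by positivity)]
  exact_mod_cast (h.trans (mul_comm _ _)).symm

theorem sum_antidiagonal_translation_coefficient_sq (n m ν : ℕ) (hm : m ≤ n) :
    ∑ p ∈ antidiagonal (2 * ν), (2 * n + 1 : ℝ) / (2 * n + 2 * ν + 1) *
        (n + m + p.1).choose p.1 * (n - m + p.2).choose p.2
      = (2 * ν + 2 * n).choose (2 * ν) := by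
  have hconv : ∑ p ∈ antidiagonal (2 * ν),
      ((n + m + p.1).choose p.1 * (n - m + p.2).choose p.2 : ℝ)
        = (2 * n + 2 * ν + 1).choose (2 * ν) := by
    have h := Nat.sum_antidiagonal_add_choose_mul_add_choose (n + m) (n - m) (2 * ν)
    rw [Nat.choose_symm_add] at h
    simp only [Nat.choose_symm_add] at h
    rw [show n + m + (n - m) + 1 + 2 * ν = 2 * n + 2 * ν + 1 by omega] at h
    exact_mod_cast h
  have hratio := Nat.cast_div_mul_choose_succ (2 * n) (2 * ν)
  push_cast at hratio
  simp only [mul_assoc, ← mul_sum]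
  rw [hconv, hratio, add_comm (2 * ν)]

theorem translation_coefficient_sum_bound_general (n m ν : ℕ) (hm : m ≤ n) :
    (∑ μ ∈ Finset.Icc (-(ν : ℤ)) (ν : ℤ),
        Real.sqrt (((2 * n + 1 : ℝ)) / (2 * n + 2 * ν + 1) *
          (Nat.choose (((n : ℤ) + m + ν - μ).toNat) (((ν : ℤ) - μ).toNat) : ℝ) *
          (Nat.choose (((n : ℤ) - m + ν + μ).toNat) (((ν : ℤ) + μ).toNat) : ℝ)))
      ≤ Real.sqrt (3 * (2 * ν + 1) * (Nat.choose (2 * ν + 2 * n) (2 * ν) : ℝ)) := by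
  set c : ℕ → ℕ → ℝ := fun i j =>
    (2 * n + 1 : ℝ) / (2 * n + 2 * ν + 1) * (n + m + i).choose i * (n - m + j).choose j
  have hc : ∀ i j, 0 ≤ c i j := fun i j => by positivity
  calc _ = ∑ p ∈ antidiagonal (2 * ν), √(c p.1 p.2) := by
        rw [← sum_Icc_neg_eq_sum_antidiagonal ν fun i j => √(c i j)]
        refine sum_congr rfl fun μ hμ => ?_
        rw [mem_Icc] at hμ
        rw [show ((n : ℤ) + m + ν - μ).toNat = n + m + ((ν : ℤ) - μ).toNat by omega,
          show ((n : ℤ) - m + ν + μ).toNat = n - m + ((ν : ℤ) + μ).toNat by omega]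
    _ ≤ √((2 * ν + 1) * (2 * ν + 2 * n).choose (2 * ν)) := by
        refine (Real.sum_sqrt_le_sqrt_card_mul_sum _ fun p : ℕ × ℕ => hc p.1 p.2).trans_eq ?_
        rw [sum_antidiagonal_translation_coefficient_sq n m ν hm, Finset.Nat.card_antidiagonal]
        push_cast; rfl
    _ ≤ _ := Real.sqrt_le_sqrt (by gcongr; linarith [Nat.cast_nonneg (α := ℝ) ν])

/-- Bound on the sum of the solid-harmonic translation coefficients
`c_{νμ} = ((2n+1)/(2n+2ν+1) ⋅ C(n+m+ν-μ, ν-μ) ⋅ C(n-m+ν+μ, ν+μ))^{1/2}`: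
`∑_{μ=-ν}^{ν} c_{νμ} ≤ (3(2ν+1) C(2ν+2n, 2ν))^{1/2}`. -/
theorem translation_coefficient_sum_bound (n m ν : ℕ) (hn : 1 ≤ n) (hm : m ≤ n) :
    (∑ μ ∈ Finset.Icc (-(ν : ℤ)) (ν : ℤ),
        Real.sqrt (((2 * n + 1 : ℝ)) / (2 * n + 2 * ν + 1) *
          (Nat.choose (((n : ℤ) + m + ν - μ).toNat) (((ν : ℤ) - μ).toNat) : ℝ) *
          (Nat.choose (((n : ℤ) - m + ν + μ).toNat) (((ν : ℤ) + μ).toNat) : ℝ)))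
      ≤ Real.sqrt (3 * (2 * ν + 1) * (Nat.choose (2 * ν + 2 * n) (2 * ν) : ℝ)) :=
  translation_coefficient_sum_bound_general n m ν hm
end

section
/- The Rothe–Hagen identity in the following special form holds: for natural numbers $n\ge 1$, $0\le m\le n$, $\nu\ge 0$, $\sum_{\mu=-\nu}^{\nu} \frac{n+m}{n+m+\nu-\mu}\binom{n+m+\nu-\mu}{\nu-\mu}\binom{n-m+\nu+\mu}{\nu+\mu} = \binom{2n+2\nu}{2\nu}$. -/
/-!
Write `a = n + m = b + 1` and `c = n - m`, and index the sum by `i = ν - μ`, `j = ν + μ`, which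
run over the antidiagonal `i + j = 2ν`. Absorption gives `a/(a+i) C(a+i, i) = C(b+i, i)`, so the
sum becomes `∑ C(b+i, i) C(c+j, j)`. By upper negation `C(b+i, i) = (-1)^i C(-(b+1), i)`, so this
is `(-1)^{2ν}` times the Chu–Vandermonde sum for `C(-(b+c+2), 2ν)`, i.e. `C(b+c+1+2ν, 2ν)`.
-/

open Finset

theorem Ring.choose_neg_natCast_add_one (a k : ℕ) :
    Ring.choose (-((a : ℤ) + 1)) k = (-1) ^ k * (a + k).choose k := by
  rw [Ring.choose_neg, show (a : ℤ) + 1 + k - 1 = ((a + k : ℕ) : ℤ) by push_cast; ring,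
    Ring.choose_natCast, Units.smul_def, Int.coe_negOnePow_natCast, smul_eq_mul]

theorem Nat.sum_antidiagonal_add_choose_mul_add_choose_s9 (r s N : ℕ) :
    ∑ ij ∈ antidiagonal N, (r + ij.1).choose ij.1 * (s + ij.2).choose ij.2
      = (r + s + 1 + N).choose N := by
  -- Chu–Vandermonde in `ℤ` at the negative upper arguments `-(r+1)` and `-(s+1)`
  have h := Ring.add_choose_eq (r := -((r : ℤ) + 1)) (s := -((s : ℤ) + 1)) N (Commute.all _ _)
  rw [show -((r : ℤ) + 1) + -((s : ℤ) + 1) = -(((r + s + 1 : ℕ) : ℤ) + 1) by push_cast; ring,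
    Ring.choose_neg_natCast_add_one] at h
  have hsign : ∀ ij ∈ antidiagonal N,
      Ring.choose (-((r : ℤ) + 1)) ij.1 * Ring.choose (-((s : ℤ) + 1)) ij.2
        = (-1) ^ N * ((r + ij.1).choose ij.1 * (s + ij.2).choose ij.2 : ℕ) := by
    rintro ⟨i, j⟩ hij
    rw [HasAntidiagonal.mem_antidiagonal] at hij
    simp only [Ring.choose_neg_natCast_add_one, ← hij, pow_add]
    push_cast
    ring
  rw [sum_congr rfl hsign, ← mul_sum] at h
  exact_mod_cast (mul_right_injective₀ (pow_ne_zero N (by norm_num : (-1 : ℤ) ≠ 0)) h).symm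

theorem Nat.add_one_div_add_mul_choose (b k : ℕ) :
    ((b : ℝ) + 1) / (b + 1 + k) * (b + 1 + k).choose k = (b + k).choose k := by
  have h := Nat.add_one_mul_choose_eq (b + k) b
  rw [show b + k + 1 = b + 1 + k by ring, Nat.choose_symm_add, Nat.choose_symm_add] at h
  rw [div_mul_eq_mul_div, div_eq_iff (by positivity), mul_comm ((b : ℝ) + 1),
    mul_comm (((b + k).choose k : ℕ) : ℝ)]
  exact_mod_cast h.symm

theorem Finset.sum_Icc_neg_toNat_eq_sum_antidiagonal {M : Type*} [AddCommMonoid M]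
    (ν : ℕ) (f : ℕ → ℕ → M) :
    ∑ μ ∈ Icc (-(ν : ℤ)) ν, f ((ν : ℤ) - μ).toNat ((ν : ℤ) + μ).toNat
      = ∑ ij ∈ antidiagonal (2 * ν), f ij.1 ij.2 := by
  refine sum_nbij' (fun μ ↦ (((ν : ℤ) - μ).toNat, ((ν : ℤ) + μ).toNat))
    (fun ij ↦ (ν : ℤ) - ij.1) ?_ ?_ ?_ ?_ (fun _ _ ↦ rfl)
  all_goals
    intro x hx
    simp only [HasAntidiagonal.mem_antidiagonal, mem_Icc, Prod.ext_iff] at hx ⊢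
    omega

/-- A special form of the Rothe–Hagen convolution identity: for `n ≥ 1`, `0 ≤ m ≤ n`,
`ν ≥ 0`,
`∑_{μ=-ν}^{ν} (n+m)/(n+m+ν-μ) C(n+m+ν-μ, ν-μ) C(n-m+ν+μ, ν+μ) = C(2n+2ν, 2ν)`. -/
theorem rothe_hagen_special (n m ν : ℕ) (hn : 1 ≤ n) (hm : m ≤ n) :
    (∑ μ ∈ Finset.Icc (-(ν : ℤ)) (ν : ℤ),
        ((n : ℝ) + m) / ((n : ℝ) + m + ν - μ) *
          (Nat.choose (((n : ℤ) + m + ν - μ).toNat) (((ν : ℤ) - μ).toNat) : ℝ) *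
          (Nat.choose (((n : ℤ) - m + ν + μ).toNat) (((ν : ℤ) + μ).toNat) : ℝ))
      = (Nat.choose (2 * n + 2 * ν) (2 * ν) : ℝ) := by
  obtain ⟨b, hb⟩ : ∃ b, n + m = b + 1 := ⟨n + m - 1, by omega⟩
  have hterm : ∀ μ ∈ Icc (-(ν : ℤ)) ν,
      ((n : ℝ) + m) / ((n : ℝ) + m + ν - μ) *
          (Nat.choose (((n : ℤ) + m + ν - μ).toNat) (((ν : ℤ) - μ).toNat) : ℝ) *
          (Nat.choose (((n : ℤ) - m + ν + μ).toNat) (((ν : ℤ) + μ).toNat) : ℝ)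
        = (((b + ((ν : ℤ) - μ).toNat).choose ((ν : ℤ) - μ).toNat
            * (n - m + ((ν : ℤ) + μ).toNat).choose ((ν : ℤ) + μ).toNat : ℕ) : ℝ) := by
    intro μ hμ
    rw [mem_Icc] at hμ
    set i := ((ν : ℤ) - μ).toNat
    have hiℝ : (i : ℝ) = ν - μ := by
      exact_mod_cast Int.toNat_of_nonneg (by omega : 0 ≤ (ν : ℤ) - μ)
    have hbℝ : (n : ℝ) + m = b + 1 := by exact_mod_cast hb
    rw [show ((n : ℤ) + m + ν - μ).toNat = b + 1 + i by omega,
      show ((n : ℤ) - m + ν + μ).toNat = n - m + ((ν : ℤ) + μ).toNat by omega,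
      show (n : ℝ) + m + ν - μ = b + 1 + i by linarith, hbℝ,
      Nat.add_one_div_add_mul_choose, Nat.cast_mul]
  rw [sum_congr rfl hterm, sum_Icc_neg_toNat_eq_sum_antidiagonal ν
    fun i j ↦ (((b + i).choose i * (n - m + j).choose j : ℕ) : ℝ), ← Nat.cast_sum,
    Nat.sum_antidiagonal_add_choose_mul_add_choose_s9]
  congr 2
  omega
end
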